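/- Let A be a finite type with the discrete topology and x : ℤ → A. Then x is repetitive if and only if the closure of the shift orbit of x in the product topology on A^ℤ equals the LI-class of x, i.e. the set of all y : ℤ → A having exactly the same finite factors as x. -/

import Mathlib

/-- The shift `S` on bi-infinite sequences: `(S x) n = x (n + 1)`. -/
def shiftZ {A : Type*} (x : ℤ → A) : ℤ → A := fun n => x (n + 1)

/-- The shift orbit `{ S^k x | k ∈ ℤ }` of a bi-infinite sequence `x`. -/
def shiftOrbit {A : Type*} (x : ℤ → A) : Set (ℤ → A) :=
  {y | ∃ k : ℤ, y = fun n => x (n + k)}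

/-- A word `w : Fin ℓ → A` occurs in `x : ℤ → A` if there is `n : ℤ` with
`w j = x (n + j)` for all `j < ℓ`. -/
def OccursIn {A : Type*} {ℓ : ℕ} (w : Fin ℓ → A) (x : ℤ → A) : Prop :=
  ∃ n : ℤ, ∀ j : Fin ℓ, w j = x (n + (j : ℕ))

/-- `x` is repetitive: for every `ℓ` there exists `L` such that every length-`ℓ` word
occurring in `x` occurs at some position inside every window of `L` consecutive
positions of `x`. -/
def Repetitive {A : Type*} (x : ℤ → A) : Prop :=
  ∀ ℓ : ℕ, ∃ L : ℕ, ∀ w : Fin ℓ → A, OccursIn w x →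
    ∀ n : ℤ, ∃ m : ℤ, n ≤ m ∧ m + ℓ ≤ n + L ∧ ∀ j : Fin ℓ, w j = x (m + (j : ℕ))

/-- The LI-class of `x`: all sequences `y` that are locally indistinguishable from `x`,
i.e. have exactly the same finite factors as `x`. -/
def LIClass {A : Type*} (x : ℤ → A) : Set (ℤ → A) :=
  {y | ∀ (ℓ : ℕ) (w : Fin ℓ → A), OccursIn w x ↔ OccursIn w y}

/-- The factor of `x` of length `ℓ` at position `n` is a palindrome:
`x (n + j) = x (n + ℓ - 1 - j)` for all `j < ℓ`. -/
def IsPalFactorAt {A : Type*} (x : ℤ → A) (ℓ : ℕ) (n : ℤ) : Prop :=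
  ∀ j : ℕ, j < ℓ → x (n + (j : ℕ)) = x (n + ((ℓ - 1 - j : ℕ) : ℤ))

/-- `x` is palindromic: it contains palindromic factors of arbitrarily large length. -/
def PalindromicZ {A : Type*} (x : ℤ → A) : Prop :=
  ∀ N : ℕ, ∃ ℓ : ℕ, N ≤ ℓ ∧ ∃ n : ℤ, IsPalFactorAt x ℓ n

/-- The centre `n + (ℓ - 1)/2` (as a real number) of a factor of length `ℓ` at
position `n`. -/
noncomputable def factorCentre (ℓ : ℕ) (n : ℤ) : ℝ := (n : ℝ) + ((ℓ : ℝ) - 1) / 2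

/-- `x` is strongly palindromic: there are `B > 0` and palindromic factors of lengths
`ℓ i` at positions `n i`, with centres `m i = n i + (ℓ i - 1)/2`, such that
`|m i| → ∞` and `exp (B * |m i|) / ℓ i → 0`. -/
def StronglyPalindromicZ {A : Type*} (x : ℤ → A) : Prop :=
  ∃ B : ℝ, 0 < B ∧ ∃ (ℓ : ℕ → ℕ) (n : ℕ → ℤ),
    (∀ i, IsPalFactorAt x (ℓ i) (n i)) ∧
    Filter.Tendsto (fun i => |factorCentre (ℓ i) (n i)|) Filter.atTop Filter.atTop ∧
    Filter.Tendsto (fun i => Real.exp (B * |factorCentre (ℓ i) (n i)|) / (ℓ i : ℝ))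
      Filter.atTop (nhds 0)

/-- The reversal `R` of a bi-infinite sequence: `(R x) n = x (-n)`. -/
def revZ {A : Type*} (x : ℤ → A) : ℤ → A := fun n => x (-n)

section Aux

variable {A : Type*} [TopologicalSpace A] [DiscreteTopology A]

lemma window_mem_nhds (y : ℤ → A) (N : ℕ) :
    {z : ℤ → A | ∀ i : ℤ, |i| ≤ (N : ℤ) → z i = y i} ∈ nhds y := by
  have hopen : IsOpen (Set.pi (Set.Icc (-(N:ℤ)) (N:ℤ)) (fun i => ({y i} : Set A))) :=
    isOpen_set_pi (Set.finite_Icc _ _) (fun i _ => isOpen_discrete _)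
  have hy : y ∈ Set.pi (Set.Icc (-(N:ℤ)) (N:ℤ)) (fun i => ({y i} : Set A)) :=
    fun i _ => rfl
  refine Filter.mem_of_superset (hopen.mem_nhds hy) ?_
  intro z hz i hi
  exact hz i (Set.mem_Icc.mpr (abs_le.mp hi))

lemma mem_closure_window_iff (S : Set (ℤ → A)) (y : ℤ → A) :
    y ∈ closure S ↔ ∀ N : ℕ, ∃ z ∈ S, ∀ i : ℤ, |i| ≤ (N : ℤ) → z i = y i := by
  constructor
  · intro h N
    obtain ⟨z, hz1, hz2⟩ := mem_closure_iff_nhds.mp h _ (window_mem_nhds y N)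
    exact ⟨z, hz2, hz1⟩
  · intro h
    rw [mem_closure_iff_nhds]
    intro U hU
    rw [nhds_pi, Filter.mem_pi] at hU
    obtain ⟨I, hI, V, hV, hsub⟩ := hU
    set N := hI.toFinset.sup Int.natAbs with hN
    obtain ⟨z, hzS, hz⟩ := h N
    refine ⟨z, hsub ?_, hzS⟩
    intro i hi
    have h1 : i.natAbs ≤ N := Finset.le_sup (f := Int.natAbs) (hI.mem_toFinset.mpr hi)
    have h2 : |i| ≤ (N : ℤ) := by rw [Int.abs_eq_natAbs]; exact_mod_cast h1
    rw [hz i h2]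
    exact mem_of_mem_nhds (hV i)

lemma mem_closure_shiftOrbit_iff (x y : ℤ → A) :
    y ∈ closure (shiftOrbit x) ↔
      ∀ N : ℕ, ∃ k : ℤ, ∀ i : ℤ, |i| ≤ (N : ℤ) → y i = x (i + k) := by
  rw [mem_closure_window_iff]
  constructor
  · intro h N
    obtain ⟨z, ⟨k, rfl⟩, hz⟩ := h N
    exact ⟨k, fun i hi => (hz i hi).symm⟩
  · intro h N
    obtain ⟨k, hk⟩ := h N
    exact ⟨fun n => x (n + k), ⟨k, rfl⟩, fun i hi => (hk i hi).symm⟩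

end Aux

/-- A bi-infinite sequence over a finite (discrete) alphabet is repetitive if and only
if its shift-orbit closure (in the product topology) equals its LI-class. -/
theorem repetitive_iff_orbitClosure_eq_LIClass {A : Type*} [Fintype A] [TopologicalSpace A]
    [DiscreteTopology A] (x : ℤ → A) :
    Repetitive x ↔ closure (shiftOrbit x) = LIClass x := by
  constructor
  · intro hrep
    ext y
    constructor
    · -- closure ⊆ LIClass
      intro hy
      rw [mem_closure_shiftOrbit_iff] at hy
      intro ℓ w
      constructor
      · rintro hwx
        obtain ⟨L, hL⟩ := hrep ℓ
        obtain ⟨k, hk⟩ := hy (L + ℓ)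
        obtain ⟨m, hm1, hm2, hm3⟩ := hL w hwx k
        refine ⟨m - k, fun j => ?_⟩
        have hj : (j : ℤ) < ℓ := by exact_mod_cast j.isLt
        have hj0 : (0:ℤ) ≤ (j : ℤ) := by positivity
        have habs : |m - k + ((j:ℕ) : ℤ)| ≤ (((L + ℓ : ℕ)) : ℤ) := by
          rw [abs_le]; omega
        have hyy : y (m - k + ((j:ℕ):ℤ)) = x (m - k + ((j:ℕ):ℤ) + k) := hk _ habs
        rw [hyy, hm3 j]
        congr 1; ring
      · rintro ⟨n, hn⟩
        obtain ⟨k, hk⟩ := hy (n.natAbs + ℓ)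
        refine ⟨n + k, fun j => ?_⟩
        have hj : (j : ℤ) < ℓ := by exact_mod_cast j.isLt
        have hj0 : (0:ℤ) ≤ (j : ℤ) := by positivity
        have habs : |n + ((j:ℕ) : ℤ)| ≤ ((n.natAbs + ℓ : ℕ) : ℤ) := by
          rw [abs_le]; omega
        rw [hn j, hk _ habs]
        congr 1; ring
    · -- LIClass ⊆ closure
      intro hy
      rw [mem_closure_shiftOrbit_iff]
      intro N
      set w : Fin (2*N+1) → A := fun j => y (-(N:ℤ) + (j : ℕ)) with hw
      have hwy : OccursIn w y := ⟨-(N:ℤ), fun j => rfl⟩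
      obtain ⟨n, hn⟩ := (hy _ w).mpr hwy
      refine ⟨n + N, fun i hi => ?_⟩
      rw [abs_le] at hi
      have hj : (i + (N:ℤ)).toNat < 2*N+1 := by omega
      have hcast : (((i + (N:ℤ)).toNat : ℕ) : ℤ) = i + N := Int.toNat_of_nonneg (by omega)
      have := hn ⟨(i + (N:ℤ)).toNat, hj⟩
      simp only [hw] at this
      rw [hcast] at this
      rw [show -(N:ℤ) + (i + N) = i by ring] at this
      rw [this]
      congr 1; ring
  · -- closure = LIClass → repetitive
    intro hcl
    by_contra hrep
    unfold Repetitive at hrep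
    push_neg at hrep
    obtain ⟨ℓ, hℓ⟩ := hrep
    choose W hWx nn hnn using hℓ
    obtain ⟨w, hwfib⟩ := Finite.exists_infinite_fiber W
    have hT : (W ⁻¹' {w}).Infinite := Set.infinite_coe_iff.mp hwfib
    set c : ℕ → ℤ := fun L => nn L + (L : ℤ) / 2 with hc
    set g : ℕ → (ℤ → A) := fun L => (fun i => x (i + c L)) with hg
    -- a cluster point of g along (atTop ⊓ 𝓟 T)
    have hne : (Filter.atTop ⊓ Filter.principal (W ⁻¹' {w})).NeBot := by
      rw [Filter.inf_principal_neBot_iff]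
      intro U hU
      obtain ⟨a, ha⟩ := Filter.mem_atTop_sets.mp hU
      obtain ⟨b, hb1, hb2⟩ := hT.exists_gt a
      exact ⟨b, ha b hb2.le, hb1⟩
    have : (Filter.map g (Filter.atTop ⊓ Filter.principal (W ⁻¹' {w}))).NeBot :=
      Filter.NeBot.map hne g
    obtain ⟨y, hy⟩ := exists_clusterPt_of_compactSpace
      (Filter.map g (Filter.atTop ⊓ Filter.principal (W ⁻¹' {w})))
    have hle : Filter.map g (Filter.atTop ⊓ Filter.principal (W ⁻¹' {w})) ≤
        Filter.principal (shiftOrbit x) := by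
      rw [Filter.le_principal_iff, Filter.mem_map]
      exact Filter.univ_mem' (fun L => ⟨c L, rfl⟩)
    have hyorb : y ∈ closure (shiftOrbit x) := by
      rw [mem_closure_iff_clusterPt]
      exact hy.mono hle
    have hyLI : y ∈ LIClass x := hcl ▸ hyorb
    obtain ⟨L0, hL0⟩ := hT.nonempty
    have hw0 : W L0 = w := hL0
    have hwx : OccursIn w x := hw0 ▸ hWx L0
    obtain ⟨m, hm⟩ := (hyLI ℓ w).mp hwx
    have hU := window_mem_nhds y (m.natAbs + ℓ)
    have hset : ({L | 2*(m.natAbs + ℓ) + 2*ℓ ≤ L} ∩ (W ⁻¹' {w})) ∈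
        Filter.atTop ⊓ Filter.principal (W ⁻¹' {w}) :=
      Filter.inter_mem (Filter.mem_inf_of_left (Filter.mem_atTop _))
        (Filter.mem_inf_of_right (Filter.mem_principal_self _))
    have hV := Filter.image_mem_map (m := g) hset
    obtain ⟨z, hzU, hzV⟩ := clusterPt_iff_nonempty.mp hy hU hV
    obtain ⟨L, ⟨hL1, hL2⟩, rfl⟩ := hzV
    have hWLw : W L = w := hL2
    have key : ∀ j : Fin ℓ, W L j = x (m + c L + ((j:ℕ):ℤ)) := by
      intro j
      have hj : (j : ℤ) < ℓ := by exact_mod_cast j.isLt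
      have hj0 : (0:ℤ) ≤ (j : ℤ) := by positivity
      have habs : |m + ((j:ℕ):ℤ)| ≤ ((m.natAbs + ℓ : ℕ) : ℤ) := by
        rw [abs_le]; omega
      have hag := hzU (m + ((j:ℕ):ℤ)) habs
      simp only [hg] at hag
      rw [hWLw, hm j, ← hag]
      congr 1; ring
    have hL1' : 2*(m.natAbs + ℓ) + 2*ℓ ≤ L := hL1
    have hcL : c L = nn L + (L:ℤ)/2 := rfl
    have h1 : nn L ≤ m + c L := by omega
    have h2 : m + c L + ℓ ≤ nn L + L := by omega
    obtain ⟨j, hjne⟩ := hnn L (m + c L) h1 h2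
    exact hjne (key j)
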